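/- Let X be an infinite set and let S be a semigroup of relations on X (under composition f∘g = {(x,z) : ∃ y, (x,y) ∈ f and (y,z) ∈ g}) with FSym(X) ⊆ S ⊆ FRel(X), where FSym(X) is the set of (graphs of) finitely supported bijections of X and FRel(X) is the set of finitely supported relations, with supp(f) = {x ∈ X : f(x) ≠ {x} or f⁻¹(x) ≠ {x}}. Then (S, supp) is a supp-perfect semigroup, and S is σ-discrete in its semi-Zariski topology and hence σ-discrete in every Hausdorff shift-invariant topology on S. -/

import Mathlib

/-- Composition of relations: `f ∘ g = {(x,z) : ∃ y, (x,y) ∈ f ∧ (y,z) ∈ g}`. -/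
def relComp {X : Type*} (f g : Set (X × X)) : Set (X × X) :=
  {p : X × X | ∃ y : X, (p.1, y) ∈ f ∧ (y, p.2) ∈ g}

/-- The image `f(x) = {y : (x,y) ∈ f}` of a point under a relation. -/
def relImg {X : Type*} (f : Set (X × X)) (x : X) : Set X := {y : X | (x, y) ∈ f}

/-- The preimage `f⁻¹(x) = {y : (y,x) ∈ f}` of a point under a relation. -/
def relPre {X : Type*} (f : Set (X × X)) (x : X) : Set X := {y : X | (y, x) ∈ f}

/-- The support of a relation: `supp f = {x : f(x) ≠ {x} or f⁻¹(x) ≠ {x}}`. -/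
def relSupp {X : Type*} (f : Set (X × X)) : Set X :=
  {x : X | relImg f x ≠ {x} ∨ relPre f x ≠ {x}}

/-- The semi-Zariski topology on a semigroup `S`: generated by the subbase of sets
`{x | a*x*b ≠ c}` and `{x | a*x*b ≠ c*x*d}` with `a, b, c, d ∈ S¹` (here `S¹ = WithOne S`
is `S` with an external identity adjoined). -/
def semiZariski (T : Type*) [Mul T] : TopologicalSpace T :=
  TopologicalSpace.generateFrom
    ({U : Set T | ∃ a b c : WithOne T, U = {x : T | a * (x : WithOne T) * b ≠ c}} ∪
     {U : Set T | ∃ a b c d : WithOne T,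
        U = {x : T | a * (x : WithOne T) * b ≠ c * (x : WithOne T) * d}})

/-- A topological space (given by a topology `τ` on `S`) is σ-discrete if it is a countable
union of subspaces, each of which is discrete in its subspace topology. -/
def SigmaDiscrete {S : Type*} (τ : TopologicalSpace S) : Prop :=
  ∃ D : ℕ → Set S, (⋃ n, D n) = Set.univ ∧
    ∀ n, @DiscreteTopology (D n) (TopologicalSpace.induced Subtype.val τ)

/-!
Off its support a relation is the identity, so relations with disjoint supports commute, and a
relation supported in a finite `F` is determined by its trace on `F × F`. A relation commuting
with the transposition `(d w)` is invariant under conjugation by it, hence so is its support;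
thus if `d ∈ supp g` and `w ∉ supp g`, then `g` does not commute with `(d w)`. This yields the
centraliser description of `S(F)`, and it isolates `g` in the semi-Zariski topology among the
relations `f` with `|supp f| = |supp g|`: choose `|supp g| + 1` points `w` outside `supp g`; if
`f` commutes with none of the `(d w)`, `d ∈ supp g`, then `supp g ⊆ supp f`. Finally, in a
Hausdorff shift-invariant topology the subbasic semi-Zariski sets are complements of fibres or of
equalisers of continuous maps, so every such topology refines the semi-Zariski one.
-/

open Set Equiv Topology

section Relations

variable {X : Type*}

lemma mem_iff_eq_of_notMem_relSupp_left {f : Set (X × X)} {x : X} (hx : x ∉ relSupp f)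
    (y : X) : (x, y) ∈ f ↔ y = x := by
  simp only [relSupp, mem_ofPred_eq, not_or, not_not] at hx
  exact Set.ext_iff.1 hx.1 y

lemma mem_iff_eq_of_notMem_relSupp_right {f : Set (X × X)} {x : X} (hx : x ∉ relSupp f)
    (y : X) : (y, x) ∈ f ↔ y = x := by
  simp only [relSupp, mem_ofPred_eq, not_or, not_not] at hx
  exact Set.ext_iff.1 hx.2 y

lemma diag_mem_of_notMem_relSupp {f : Set (X × X)} {x : X} (hx : x ∉ relSupp f) : (x, x) ∈ f :=
  (mem_iff_eq_of_notMem_relSupp_left hx x).2 rfl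

lemma fst_mem_relSupp_of_ne {f : Set (X × X)} {a b : X} (h : (a, b) ∈ f) (hne : a ≠ b) :
    a ∈ relSupp f :=
  not_not.1 fun ha => hne ((mem_iff_eq_of_notMem_relSupp_left ha b).1 h).symm

lemma snd_mem_relSupp_of_ne {f : Set (X × X)} {a b : X} (h : (a, b) ∈ f) (hne : a ≠ b) :
    b ∈ relSupp f :=
  not_not.1 fun hb => hne ((mem_iff_eq_of_notMem_relSupp_right hb a).1 h)

lemma relSupp_relComp_subset (f g : Set (X × X)) :
    relSupp (relComp f g) ⊆ relSupp f ∪ relSupp g := by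
  intro x hx
  by_contra hfg
  rw [mem_union, not_or] at hfg
  obtain ⟨hf, hg⟩ := hfg
  refine hx.elim (fun h => h ?_) (fun h => h ?_) <;> ext y
  · simp only [relImg, relComp, mem_ofPred_eq, mem_iff_eq_of_notMem_relSupp_left hf,
      exists_eq_left, mem_iff_eq_of_notMem_relSupp_left hg, mem_singleton_iff]
  · simp only [relPre, relComp, mem_ofPred_eq, mem_iff_eq_of_notMem_relSupp_right hg,
      exists_eq_right, mem_iff_eq_of_notMem_relSupp_right hf, mem_singleton_iff]

lemma relComp_subset_of_disjoint {f g : Set (X × X)} (h : Disjoint (relSupp f) (relSupp g)) :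
    relComp f g ⊆ relComp g f := by
  rintro ⟨a, c⟩ ⟨b, hab, hbc⟩
  by_cases hba : a = b
  · subst hba
    refine ⟨c, hbc, ?_⟩
    by_cases hac : a = c
    · exact hac ▸ hab
    · exact diag_mem_of_notMem_relSupp
        (h.notMem_of_mem_right (snd_mem_relSupp_of_ne hbc hac))
  · have hag := h.notMem_of_mem_left (fst_mem_relSupp_of_ne hab hba)
    have hbg := h.notMem_of_mem_left (snd_mem_relSupp_of_ne hab hba)
    have hcb : c = b := (mem_iff_eq_of_notMem_relSupp_left hbg c).1 hbc
    exact ⟨a, diag_mem_of_notMem_relSupp hag, hcb ▸ hab⟩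

lemma relComp_comm_of_disjoint {f g : Set (X × X)} (h : Disjoint (relSupp f) (relSupp g)) :
    relComp f g = relComp g f :=
  (relComp_subset_of_disjoint h).antisymm (relComp_subset_of_disjoint h.symm)

lemma eq_of_inter_prod_eq {f g : Set (X × X)} {F : Set X} (hf : relSupp f ⊆ F)
    (hg : relSupp g ⊆ F) (h : f ∩ F ×ˢ F = g ∩ F ×ˢ F) : f = g := by
  ext ⟨a, b⟩
  by_cases ha : a ∈ F
  · by_cases hb : b ∈ F
    · simpa [ha, hb] using Set.ext_iff.1 h (a, b)
    · rw [mem_iff_eq_of_notMem_relSupp_right (fun h => hb (hf h)),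
        mem_iff_eq_of_notMem_relSupp_right (fun h => hb (hg h))]
  · rw [mem_iff_eq_of_notMem_relSupp_left (fun h => ha (hf h)),
      mem_iff_eq_of_notMem_relSupp_left (fun h => ha (hg h))]

lemma finite_setOf_relSupp_subset {F : Set X} (hF : F.Finite) :
    {f : Set (X × X) | relSupp f ⊆ F}.Finite := by
  refine Finite.of_finite_image (f := (· ∩ F ×ˢ F)) ?_
    fun f hf g hg h => eq_of_inter_prod_eq hf hg h
  exact (hF.prod hF).finite_subsets.subset (image_subset_iff.2 fun _ _ => inter_subset_right)

end Relations

section PermGraph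

variable {X : Type*}

def permGraph (σ : Perm X) : Set (X × X) := {p | p.2 = σ p.1}

lemma relSupp_permGraph (σ : Perm X) : relSupp (permGraph σ) = {x | σ x ≠ x} := by
  ext x
  have himg : relImg (permGraph σ) x = {σ x} := rfl
  have hpre : relPre (permGraph σ) x = {σ.symm x} := by
    ext y
    exact eq_comm.trans σ.eq_symm_apply.symm
  simp only [relSupp, mem_ofPred_eq, himg, hpre, ne_eq, singleton_eq_singleton_iff,
    σ.symm_apply_eq, eq_comm (a := x), or_self]

lemma mem_relComp_permGraph_left {σ : Perm X} {f : Set (X × X)} {a c : X} :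
    (a, c) ∈ relComp (permGraph σ) f ↔ (σ a, c) ∈ f := by
  simp [relComp, permGraph]

lemma mem_relComp_permGraph_right {σ : Perm X} {f : Set (X × X)} {a c : X} :
    (a, c) ∈ relComp f (permGraph σ) ↔ (a, σ.symm c) ∈ f := by
  simp [relComp, permGraph, ← σ.symm_apply_eq]

lemma apply_mem_iff_of_relComp_permGraph_comm {σ : Perm X} {f : Set (X × X)}
    (h : relComp (permGraph σ) f = relComp f (permGraph σ)) (a b : X) :
    (σ a, σ b) ∈ f ↔ (a, b) ∈ f := by
  simpa [mem_relComp_permGraph_left, mem_relComp_permGraph_right] using Set.ext_iff.1 h (a, σ b)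

lemma apply_mem_relSupp_iff {σ : Perm X} {f : Set (X × X)}
    (h : ∀ a b, (σ a, σ b) ∈ f ↔ (a, b) ∈ f) (x : X) :
    σ x ∈ relSupp f ↔ x ∈ relSupp f := by
  have himg : relImg f (σ x) = σ '' relImg f x := by
    ext y
    rw [σ.image_eq_preimage_symm, ← σ.apply_symm_apply y]
    exact (h x (σ.symm y)).trans (by simp [relImg])
  have hpre : relPre f (σ x) = σ '' relPre f x := by
    ext y
    rw [σ.image_eq_preimage_symm, ← σ.apply_symm_apply y]
    exact (h (σ.symm y) x).trans (by simp [relPre])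
  simp only [relSupp, mem_ofPred_eq, himg, hpre, ← image_singleton,
    (σ.injective.image_injective).ne_iff]

lemma relComp_permGraph_swap_ne [DecidableEq X] {f : Set (X × X)} {x w : X}
    (hx : x ∈ relSupp f) (hw : w ∉ relSupp f) :
    relComp (permGraph (swap x w)) f ≠ relComp f (permGraph (swap x w)) := fun h =>
  hw (by simpa using (apply_mem_relSupp_iff (apply_mem_iff_of_relComp_permGraph_comm h) x).2 hx)

lemma setOf_swap_apply_ne_subset [DecidableEq X] (x w : X) : {z | swap x w z ≠ z} ⊆ {x, w} :=
  fun _ hz => (swap_apply_ne_self_iff.1 hz).2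

end PermGraph

section SemiZariski

variable {T : Type*} [Mul T]

lemma isOpen_semiZariski_ne (c : T) : IsOpen[semiZariski T] {x | x ≠ c} :=
  TopologicalSpace.isOpen_generateFrom_of_mem <| Or.inl ⟨1, 1, c, by simp⟩

lemma isOpen_semiZariski_mul_ne_mul (t : T) : IsOpen[semiZariski T] {x | t * x ≠ x * t} :=
  TopologicalSpace.isOpen_generateFrom_of_mem <|
    Or.inr ⟨t, 1, 1, t, by simp [← WithOne.coe_mul]⟩

lemma t1Space_semiZariski : @T1Space T (semiZariski T) :=
  letI := semiZariski T
  ⟨fun c => isOpen_compl_iff.1 (isOpen_semiZariski_ne c)⟩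

lemma exists_continuous_withOne_mul_mul_eq [TopologicalSpace T]
    (hl : ∀ a : T, Continuous (a * ·)) (hr : ∀ a : T, Continuous (· * a)) (a b : WithOne T) :
    ∃ φ : T → T, Continuous φ ∧ ∀ x : T, a * x * b = φ x := by
  induction a using WithOne.recOneCoe with
  | one =>
    induction b using WithOne.recOneCoe with
    | one => exact ⟨id, continuous_id, fun x => by simp⟩
    | coe b => exact ⟨(· * b), hr b, fun x => by simp [WithOne.coe_mul]⟩
  | coe a =>
    induction b using WithOne.recOneCoe with
    | one => exact ⟨(a * ·), hl a, fun x => by simp [WithOne.coe_mul]⟩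
    | coe b =>
      exact ⟨fun x => a * x * b, (hr b).comp (hl a), fun x => by simp [WithOne.coe_mul]⟩

lemma le_semiZariski [TopologicalSpace T] [T2Space T]
    (hl : ∀ a : T, Continuous (a * ·)) (hr : ∀ a : T, Continuous (· * a)) :
    ‹TopologicalSpace T› ≤ semiZariski T := by
  refine le_generateFrom ?_
  rintro U (⟨a, b, c, rfl⟩ | ⟨a, b, c, d, rfl⟩)
  · obtain ⟨φ, hφ, hφeq⟩ := exists_continuous_withOne_mul_mul_eq hl hr a b
    induction c using WithOne.recOneCoe with
    | one => simp [hφeq]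
    | coe c =>
      simp only [hφeq, ne_eq, WithOne.coe_inj]
      exact isOpen_compl_singleton.preimage hφ
  · obtain ⟨φ, hφ, hφeq⟩ := exists_continuous_withOne_mul_mul_eq hl hr a b
    obtain ⟨ψ, hψ, hψeq⟩ := exists_continuous_withOne_mul_mul_eq hl hr c d
    simp only [hφeq, hψeq, ne_eq, WithOne.coe_inj]
    exact (isClosed_eq hφ hψ).isOpen_compl

end SemiZariski

lemma SigmaDiscrete.mono {S : Type*} {τ σ : TopologicalSpace S} (h : τ ≤ σ)
    (hσ : SigmaDiscrete σ) : SigmaDiscrete τ := by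
  obtain ⟨D, hD, hdisc⟩ := hσ
  refine ⟨D, hD, fun n => @DiscreteTopology.mk _ (.induced _ τ) (le_bot_iff.1 ?_)⟩
  exact (hdisc n).eq_bot ▸ induced_mono h

section SupportCriteria

variable {X T : Type*} [Mul T] {supp : T → Set X}

lemma mem_or_mem_of_mul_ne_mul (hcomm : ∀ f g, Disjoint (supp f) (supp g) → f * g = g * f)
    {t f : T} {d w : X} (ht : supp t ⊆ {d, w}) (h : t * f ≠ f * t) :
    d ∈ supp f ∨ w ∈ supp f := by
  by_contra! hdw
  refine h (hcomm t f (disjoint_left.2 fun z hz hzf => ?_))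
  rcases ht hz with rfl | rfl
  exacts [hdw.1 hzf, hdw.2 hzf]

lemma setOf_supp_subset_eq_centralizer [Infinite X] (hfin : ∀ f, (supp f).Finite)
    (hcomm : ∀ f g, Disjoint (supp f) (supp g) → f * g = g * f)
    (t : X → X → T) (ht : ∀ d w, supp (t d w) ⊆ {d, w})
    (hnc : ∀ g d w, d ∈ supp g → w ∉ supp g → t d w * g ≠ g * t d w)
    {F : Set X} (hF : F.Finite) :
    {f | supp f ⊆ F} = {g | ∀ f, supp f ⊆ Fᶜ → f * g = g * f} := by
  ext g
  refine ⟨fun hg f hf => hcomm f g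
    (disjoint_of_subset_left hf (disjoint_compl_left.mono_right hg)), fun hg x hxg => ?_⟩
  by_contra hxF
  obtain ⟨w, hw⟩ := ((hfin g).union (hF.insert x)).infinite_compl.nonempty
  simp only [compl_union, mem_inter_iff, mem_compl_iff, mem_insert_iff, not_or] at hw
  obtain ⟨hwg, hwx, hwF⟩ := hw
  refine hnc g x w hxg hwg (hg _ fun z hz => ?_)
  rcases ht x w hz with rfl | rfl
  exacts [hxF, hwF]

variable (t : X → X → T)

lemma exists_isOpen_semiZariski_inter_eq_singleton [Infinite X] (hfin : ∀ f, (supp f).Finite)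
    (hloc : ∀ F : Set X, F.Finite → {f | supp f ⊆ F}.Finite)
    (hnc : ∀ g d w, d ∈ supp g → w ∉ supp g → t d w * g ≠ g * t d w)
    (hmeet : ∀ f d w, t d w * f ≠ f * t d w → d ∈ supp f ∨ w ∈ supp f) (g : T) :
    ∃ U, IsOpen[semiZariski T] U ∧ U ∩ {f | (supp f).ncard = (supp g).ncard} = {g} := by
  let _ := semiZariski T
  have := t1Space_semiZariski (T := T)
  obtain ⟨W, hWg, hWcard⟩ := (hfin g).infinite_compl.exists_subset_card_eq ((supp g).ncard + 1)
  refine ⟨(⋂ d ∈ supp g, ⋂ w ∈ W, {f | t d w * f ≠ f * t d w}) ∩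
      ({f | supp f ⊆ supp g} \ {g})ᶜ, ?_, ?_⟩
  · exact ((hfin g).isOpen_biInter fun d _ => W.finite_toSet.isOpen_biInter fun w _ =>
      isOpen_semiZariski_mul_ne_mul _).inter ((hloc _ (hfin g)).sdiff.isClosed.isOpen_compl)
  ext f
  simp only [mem_inter_iff, mem_iInter, mem_compl_iff, mem_sdiff, mem_ofPred_eq,
    mem_singleton_iff, not_and, not_not]
  constructor
  · rintro ⟨⟨hU, hsub⟩, hcard⟩
    have hgf : supp g ⊆ supp f := fun d hd => by
      by_contra hdf
      have hWf : (W : Set X) ⊆ supp f := fun w hw =>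
        (hmeet f d w (hU d hd w hw)).resolve_left hdf
      have := ncard_le_ncard hWf (hfin f)
      rw [ncard_coe_finset, hWcard, hcard] at this
      omega
    exact hsub (eq_of_subset_of_ncard_le hgf hcard.le (hfin f)).ge
  · rintro rfl
    exact ⟨⟨fun d hd w hw => hnc f d w hd (hWg hw), fun _ => rfl⟩, rfl⟩

lemma sigmaDiscrete_semiZariski_of_transpositions [Infinite X] (hfin : ∀ f, (supp f).Finite)
    (hloc : ∀ F : Set X, F.Finite → {f | supp f ⊆ F}.Finite)
    (hnc : ∀ g d w, d ∈ supp g → w ∉ supp g → t d w * g ≠ g * t d w)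
    (hmeet : ∀ f d w, t d w * f ≠ f * t d w → d ∈ supp f ∨ w ∈ supp f) :
    SigmaDiscrete (semiZariski T) := by
  let _ := semiZariski T
  refine ⟨fun n => {f | (supp f).ncard = n}, iUnion_eq_univ_iff.2 fun f => ⟨_, rfl⟩,
    fun n => discreteTopology_subtype_iff'.2 fun g hg => ?_⟩
  obtain ⟨U, hU, hUg⟩ := exists_isOpen_semiZariski_inter_eq_singleton t hfin hloc hnc hmeet g
  exact ⟨U, hU, hg ▸ hUg⟩

end SupportCriteria

/-- Let `X` be an infinite set and `S` a semigroup of relations on `X` (multiplication being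
composition of relations) with `FSym X ⊆ S ⊆ FRel X`. Then `(S, supp)` is a supp-perfect
semigroup, `S` is σ-discrete in its semi-Zariski topology, and `S` is σ-discrete in every
Hausdorff shift-invariant topology on `S`. -/
theorem semigroup_between_FSym_FRel_suppPerfect_sigmaDiscrete
    {X : Type*} [Infinite X] (S : Set (Set (X × X))) [Mul ↥S]
    (hmul : ∀ f g : ↥S, ((f * g : ↥S) : Set (X × X)) = relComp (f : Set (X × X)) g)
    (hFSym : ∀ e : Equiv.Perm X, {x : X | e x ≠ x}.Finite → {p : X × X | p.2 = e p.1} ∈ S)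
    (hFRel : ∀ f ∈ S, (relSupp f).Finite) :
    -- (S, supp) is a supp-perfect semigroup:
    ((∀ f g : ↥S, relSupp ((f * g : ↥S) : Set (X × X)) ⊆
        relSupp (f : Set (X × X)) ∪ relSupp (g : Set (X × X))) ∧
     (∀ f g : ↥S, relSupp (f : Set (X × X)) ∩ relSupp (g : Set (X × X)) = ∅ → f * g = g * f) ∧
     (⋃ f : ↥S, relSupp (f : Set (X × X))) = Set.univ ∧
     (∀ f : ↥S, (relSupp (f : Set (X × X))).Finite) ∧
     (∀ F : Set X, F.Finite → {f : ↥S | relSupp (f : Set (X × X)) ⊆ F}.Finite) ∧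
     (∀ F : Set X, F.Finite →
        {f : ↥S | relSupp (f : Set (X × X)) ⊆ F} =
          {g : ↥S | ∀ f : ↥S, relSupp (f : Set (X × X)) ⊆ Fᶜ → f * g = g * f})) ∧
    -- S is σ-discrete in its semi-Zariski topology:
    SigmaDiscrete (semiZariski ↥S) ∧
    -- S is σ-discrete in every Hausdorff shift-invariant topology:
    (∀ τ : TopologicalSpace ↥S, @T2Space ↥S τ →
      (∀ a : ↥S, @Continuous _ _ τ τ (fun x => a * x)) →
      (∀ a : ↥S, @Continuous _ _ τ τ (fun x => x * a)) →
      SigmaDiscrete τ) := by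
  classical
  have hfin : ∀ f : ↥S, (relSupp (f : Set (X × X))).Finite := fun f => hFRel _ f.2
  have hloc : ∀ F : Set X, F.Finite → {f : ↥S | relSupp (f : Set (X × X)) ⊆ F}.Finite :=
    fun F hF => (finite_setOf_relSupp_subset hF).preimage Subtype.val_injective.injOn
  have hcomm : ∀ f g : ↥S,
      Disjoint (relSupp (f : Set (X × X))) (relSupp (g : Set (X × X))) → f * g = g * f :=
    fun f g h => Subtype.ext <| by rw [hmul, hmul, relComp_comm_of_disjoint h]
  let t : X → X → ↥S := fun d w => ⟨permGraph (swap d w), hFSym _ <|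
    ((toFinite {d, w}).subset (setOf_swap_apply_ne_subset d w))⟩
  have ht : ∀ d w, relSupp (t d w : Set (X × X)) ⊆ {d, w} := fun d w =>
    (relSupp_permGraph _).trans_subset (setOf_swap_apply_ne_subset d w)
  have hnc : ∀ (g : ↥S) d w, d ∈ relSupp (g : Set (X × X)) →
      w ∉ relSupp (g : Set (X × X)) → t d w * g ≠ g * t d w := fun g d w hd hw h =>
    relComp_permGraph_swap_ne hd hw (by simpa only [hmul] using congrArg Subtype.val h)
  have hZ : SigmaDiscrete (semiZariski ↥S) := sigmaDiscrete_semiZariski_of_transpositions t hfin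
    hloc hnc fun f d w => mem_or_mem_of_mul_ne_mul hcomm (ht d w)
  refine ⟨⟨fun f g => ?_, fun f g h => hcomm f g (disjoint_iff_inter_eq_empty.2 h), ?_, hfin,
    hloc, fun F hF => setOf_supp_subset_eq_centralizer hfin hcomm t ht hnc hF⟩,
    hZ, fun τ _ hl hr => hZ.mono (le_semiZariski hl hr)⟩
  · rw [hmul]
    exact relSupp_relComp_subset _ _
  · refine iUnion_eq_univ_iff.2 fun x => ?_
    obtain ⟨w, hw⟩ := exists_ne x
    exact ⟨t x w, by simpa [t, relSupp_permGraph] using hw⟩
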